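/- arXiv:2307.10524 — 2 statements merged into one kernel-verified Lean document; each statement's English description precedes it below -/
import Mathlib

section
/- Let Q⋆, Q̃ : U → ℝ with Q̃ Lipschitz of constant L_Q on a convex compact set U. Let ũ minimize Q̃, let u⋆ minimize Q⋆, let ū ∈ U, R ≥ 0, and let u be the projection of ũ onto the ball of radius R around ū (along the segment). Define ζ^Q = Q̃(u) − Q⋆(u) and ζ^V = Q̃(ũ) − Q⋆(u⋆), and μ = ζ^V − ζ^Q. Then Q⋆(u) − inf_{v∈U} Q⋆(v) ≤ L_Q · max{0, ‖ũ − ū‖ − R} + μ. -/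
/-!
Unfolding `μ` gives the identity `Q⋆ u − Q⋆ u⋆ = (Q̃ u − Q̃ ũ) + μ`; the Lipschitz bound controls
the first term by `L_Q ‖u − ũ‖`, and the clipped step `u` lies at distance exactly
`(1 − λ) ‖ũ − ū‖ = max 0 (‖ũ − ū‖ − R)` from `ũ`.
-/

open scoped Classical

open AffineMap

lemma one_sub_min_one_div_mul {R d : ℝ} (hR : 0 ≤ R) (hd : 0 ≤ d) :
    (1 - min 1 (R / d)) * d = max 0 (d - R) := by
  rcases hd.eq_or_lt with rfl | hd
  · simp [hR]
  rcases le_total d R with hdR | hRd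
  · rw [min_eq_left ((one_le_div hd).2 hdR), max_eq_left (by linarith)]
    ring
  · rw [min_eq_right ((div_le_one hd).2 hRd), max_eq_right (by linarith)]
    field_simp

section ProjCoeff

variable {E : Type*} [NormedAddCommGroup E]

/-- The weight `λ(R)` that moves `y` towards `x` by at most `R`; the case `x = y` is split off
because `R / 0 = 0` in Lean. -/
noncomputable def projCoeff (R : ℝ) (x y : E) : ℝ :=
  if x = y then 1 else min 1 (R / ‖x - y‖)

lemma projCoeff_nonneg {R : ℝ} (hR : 0 ≤ R) (x y : E) : 0 ≤ projCoeff R x y := by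
  unfold projCoeff
  split_ifs
  exacts [zero_le_one, le_min zero_le_one (div_nonneg hR (norm_nonneg _))]

lemma projCoeff_le_one (R : ℝ) (x y : E) : projCoeff R x y ≤ 1 := by
  unfold projCoeff
  split_ifs
  exacts [le_rfl, min_le_left _ _]

lemma dist_lineMap_projCoeff [NormedSpace ℝ E] {R : ℝ} (hR : 0 ≤ R) (x y : E) :
    dist (lineMap y x (projCoeff R x y)) x = max 0 (‖x - y‖ - R) := by
  rw [dist_lineMap_right, dist_comm, dist_eq_norm, Real.norm_eq_abs,
    abs_of_nonneg (sub_nonneg.2 (projCoeff_le_one R x y))]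
  by_cases hxy : x = y
  · simp [projCoeff, hxy, hR]
  · rw [projCoeff, if_neg hxy, one_sub_min_one_div_mul hR (norm_nonneg _)]

end ProjCoeff

theorem projection_lemma_per_step_general
    {E : Type*} [NormedAddCommGroup E] [NormedSpace ℝ E]
    (U : Set E) (hUconv : Convex ℝ U)
    (Qstar Qtilde : E → ℝ) (L_Q : ℝ)
    (hLip : ∀ a ∈ U, ∀ b ∈ U, |Qtilde a - Qtilde b| ≤ L_Q * ‖a - b‖)
    (ub ut ustar : E) (hub : ub ∈ U) (hut : ut ∈ U) (hustar : ustar ∈ U)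
    (hminstar : ∀ v ∈ U, Qstar ustar ≤ Qstar v)
    (R : ℝ) (hR : 0 ≤ R)
    (lam : ℝ) (hlam : lam = if ut = ub then 1 else min 1 (R / ‖ut - ub‖))
    (u : E) (hu : u = lam • ut + (1 - lam) • ub)
    (ζQ ζV μ : ℝ)
    (hζQ : ζQ = Qtilde u - Qstar u)
    (hζV : ζV = Qtilde ut - Qstar ustar)
    (hμ : μ = ζV - ζQ) :
    Qstar u - sInf (Qstar '' U) ≤ L_Q * max 0 (‖ut - ub‖ - R) + μ := by
  have hlam' : lam = projCoeff R ut ub := hlam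
  have hu_lineMap : u = lineMap ub ut lam := by
    rw [hu, lineMap_apply_module, add_comm]
  have hlam0 := hlam' ▸ projCoeff_nonneg hR ut ub
  have hlam1 := hlam' ▸ projCoeff_le_one R ut ub
  have huU : u ∈ U := hu ▸ hUconv hut hub hlam0 (sub_nonneg.2 hlam1) (by ring)
  have hdist : ‖u - ut‖ = max 0 (‖ut - ub‖ - R) := by
    rw [← dist_eq_norm, hu_lineMap, hlam', dist_lineMap_projCoeff hR]
  have hinf : sInf (Qstar '' U) = Qstar ustar :=
    IsLeast.csInf_eq ⟨Set.mem_image_of_mem _ hustar, Set.forall_mem_image.2 hminstar⟩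
  calc Qstar u - sInf (Qstar '' U) = (Qtilde u - Qtilde ut) + μ := by
        rw [hinf, hμ, hζV, hζQ]; ring
    _ ≤ L_Q * max 0 (‖ut - ub‖ - R) + μ := by
        rw [← hdist]
        exact add_le_add_left ((le_abs_self _).trans (hLip u huU ut hut)) μ

/-- Per-step projection (consistency) lemma: with `ζ^Q = Q̃ u − Q⋆ u`,
`ζ^V = Q̃ ut − Q⋆ u⋆` and `μ = ζ^V − ζ^Q`, the optimal-Q suboptimality of
the projected action satisfies
`Q⋆ u − inf_{v∈U} Q⋆ v ≤ L_Q · max 0 (‖ut − ub‖ − R) + μ`. -/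
theorem projection_lemma_per_step
    {E : Type*} [NormedAddCommGroup E] [NormedSpace ℝ E]
    (U : Set E) (hUconv : Convex ℝ U) (hUcomp : IsCompact U)
    (Qstar Qtilde : E → ℝ) (L_Q : ℝ) (hL : 0 ≤ L_Q)
    (hLip : ∀ a ∈ U, ∀ b ∈ U, |Qtilde a - Qtilde b| ≤ L_Q * ‖a - b‖)
    (ub ut ustar : E) (hub : ub ∈ U) (hut : ut ∈ U) (hustar : ustar ∈ U)
    (hmin : ∀ v ∈ U, Qtilde ut ≤ Qtilde v)
    (hminstar : ∀ v ∈ U, Qstar ustar ≤ Qstar v)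
    (R : ℝ) (hR : 0 ≤ R)
    (lam : ℝ) (hlam : lam = if ut = ub then 1 else min 1 (R / ‖ut - ub‖))
    (u : E) (hu : u = lam • ut + (1 - lam) • ub)
    (ζQ ζV μ : ℝ)
    (hζQ : ζQ = Qtilde u - Qstar u)
    (hζV : ζV = Qtilde ut - Qstar ustar)
    (hμ : μ = ζV - ζQ) :
    Qstar u - sInf (Qstar '' U) ≤ L_Q * max 0 (‖ut - ub‖ - R) + μ :=
  projection_lemma_per_step_general U hUconv Qstar Qtilde L_Q hLip ub ut ustar hub hut hustar
    hminstar R hR lam hlam u hu ζQ ζV μ hζQ hζV hμ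
end

section
/- If a policy π̄ satisfies W_p(ρ_{t₁:t₂}(ρ), ρ_{t₁:t₂}(ρ')) ≤ s(t₂−t₁)·W_p(ρ, ρ') for all initial distributions ρ, ρ' within Wasserstein distance r, with ∑_{t=0}^{T−1} s(t) ≤ C_s, and if for each t the switching discrepancy satisfies W_p(ρ̄_{t−τ|t−τ}, ρ̄_{t−τ|t−τ−1}) ≤ a_{t−τ} ≤ r, then W_p(ρ_t, ρ̄_t) ≤ ∑_{τ=0}^{t−1} s(τ)·a_{t−τ} for every t, and consequently ∑_{t=0}^{T−1} W_p(ρ_t, ρ̄_t) ≤ C_s · ∑_{t=0}^{T−1} a_t. -/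
/-!
Switching from the augmented policy to the baseline one step at a time interpolates between
`ρ̄ t = B t 0` and `ρ t = B t t`. Consecutive interpolants at time `t` differ only by the
switch at step `j + 1`, whose discrepancy `a (j + 1) ≤ r` is propagated by the baseline
dynamics over `t - (j + 1)` steps and so grows by at most the factor `s (t - (j + 1))`.
The triangle inequality along the interpolation gives the pointwise bound, a convolution
of `s` and `a`; summing over `t` and exchanging the order of summation bounds its total by
`(∑ s) (∑ a)`.
-/

open Finset

theorem sum_range_sum_range_mul_sub_le {R : Type*} [Semiring R] [PartialOrder R]
    [IsOrderedRing R] {s a : ℕ → R} (hs : ∀ τ, 0 ≤ s τ) (ha : ∀ k, 0 ≤ a k) (T : ℕ) :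
    ∑ t ∈ range T, ∑ τ ∈ range t, s τ * a (t - τ) ≤
      (∑ τ ∈ range T, s τ) * ∑ k ∈ range T, a k := by
  have hshift (τ : ℕ) : ∑ t ∈ Ioo τ T, a (t - τ) ≤ ∑ k ∈ range T, a k := by
    rw [← sum_image (g := (· - τ)) fun t ht t' ht' h => by simp at ht ht' h; omega]
    exact sum_le_sum_of_subset_of_nonneg (by intro k; simp; omega) fun k _ _ => ha k
  calc ∑ t ∈ range T, ∑ τ ∈ range t, s τ * a (t - τ)
      = ∑ τ ∈ range T, s τ * ∑ t ∈ Ioo τ T, a (t - τ) := by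
        simp_rw [mul_sum]
        exact sum_comm' fun t τ => by simp; omega
    _ ≤ ∑ τ ∈ range T, s τ * ∑ k ∈ range T, a k :=
        sum_le_sum fun τ _ => mul_le_mul_of_nonneg_left (hshift τ) (hs τ)
    _ = (∑ τ ∈ range T, s τ) * ∑ k ∈ range T, a k := (sum_mul ..).symm

theorem dist_le_mul_of_locally_lipschitz {M N : Type*} [PseudoMetricSpace M]
    [PseudoMetricSpace N] {f : M → N} {K r c : ℝ} {x y : M} (hK : 0 ≤ K)
    (hf : ∀ m m', dist m m' ≤ r → dist (f m) (f m') ≤ K * dist m m')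
    (hxy : dist x y ≤ c) (hc : c ≤ r) : dist (f x) (f y) ≤ K * c :=
  (hf x y (hxy.trans hc)).trans (mul_le_mul_of_nonneg_left hxy hK)

theorem dist_switched_le_sum {M : Type*} [PseudoMetricSpace M] {r : ℝ} {s a : ℕ → ℝ}
    {Φ : ℕ → ℕ → M → M} {B : ℕ → ℕ → M} (hs : ∀ t, 0 ≤ s t) (har : ∀ k, a k ≤ r)
    (hΦ : ∀ t₁ t₂ : ℕ, ∀ m m' : M, dist m m' ≤ r →
      dist (Φ t₁ t₂ m) (Φ t₁ t₂ m') ≤ s (t₂ - t₁) * dist m m')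
    (hstep : ∀ t j, j < t →
      B t (j + 1) = Φ (j + 1) t (B (j + 1) (j + 1)) ∧
      B t j = Φ (j + 1) t (B (j + 1) j))
    (hswitch : ∀ k : ℕ, 1 ≤ k → dist (B k k) (B k (k - 1)) ≤ a k) (t : ℕ) :
    dist (B t t) (B t 0) ≤ ∑ τ ∈ range t, s τ * a (t - τ) := by
  have hgap {j : ℕ} (hj : j < t) :
      dist (B t j) (B t (j + 1)) ≤ s (t - 1 - j) * a (t - (t - 1 - j)) := by
    obtain ⟨hnext, hcur⟩ := hstep t j hj
    have hsw : dist (B (j + 1) j) (B (j + 1) (j + 1)) ≤ a (j + 1) := by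
      simpa [dist_comm] using hswitch (j + 1) (by omega)
    rw [hcur, hnext, show t - 1 - j = t - (j + 1) by omega,
      show t - (t - (j + 1)) = j + 1 by omega]
    exact dist_le_mul_of_locally_lipschitz (hs _) (hΦ _ _) hsw (har _)
  rw [dist_comm, ← sum_range_reflect]
  exact dist_le_range_sum_of_dist_le t hgap

/-- Metric abstraction of the perturbation lemma. `Φ t₁ t₂` propagates
distributions from step `t₁` to step `t₂` under the robust baseline and is
locally `s(t₂−t₁)`-Lipschitz within radius `r`; `B t j` is the distribution at
time `t` obtained by switching from the augmented policy to the baseline at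
time `j` (`B t t = ρ t`, `B t 0 = ρ̄ t`), and the per-switch discrepancies are
bounded by `a k ≤ r`. Then `d(ρ t, ρ̄ t) ≤ ∑_{τ<t} s τ · a (t−τ)` and
`∑_{t<T} d(ρ t, ρ̄ t) ≤ C_s · ∑_{t<T} a t`. -/
theorem perturbation_lemma_metric
    {M : Type*} [MetricSpace M]
    (T : ℕ) (r C_s : ℝ) (s a : ℕ → ℝ)
    (hs : ∀ t, 0 ≤ s t) (hC : ∀ t ≤ T, ∑ τ ∈ range t, s τ ≤ C_s)
    (ha : ∀ k, 0 ≤ a k) (har : ∀ k, a k ≤ r)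
    (Φ : ℕ → ℕ → M → M)
    (hΦ : ∀ t₁ t₂ : ℕ, ∀ m m' : M, dist m m' ≤ r →
      dist (Φ t₁ t₂ m) (Φ t₁ t₂ m') ≤ s (t₂ - t₁) * dist m m')
    (ρ ρbar : ℕ → M) (B : ℕ → ℕ → M)
    (hBtop : ∀ t, B t t = ρ t)
    (hBbot : ∀ t, B t 0 = ρbar t)
    (hstep : ∀ t j, j < t →
      B t (j + 1) = Φ (j + 1) t (B (j + 1) (j + 1)) ∧
      B t j = Φ (j + 1) t (B (j + 1) j))
    (hswitch : ∀ k : ℕ, 1 ≤ k → dist (B k k) (B k (k - 1)) ≤ a k) :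
    (∀ t, dist (ρ t) (ρbar t) ≤ ∑ τ ∈ range t, s τ * a (t - τ)) ∧
      ∑ t ∈ range T, dist (ρ t) (ρbar t) ≤ C_s * ∑ t ∈ range T, a t := by
  have hpointwise (t : ℕ) : dist (ρ t) (ρbar t) ≤ ∑ τ ∈ range t, s τ * a (t - τ) := by
    rw [← hBtop, ← hBbot]
    exact dist_switched_le_sum hs har hΦ hstep hswitch t
  refine ⟨hpointwise, ?_⟩
  calc ∑ t ∈ range T, dist (ρ t) (ρbar t)
      ≤ ∑ t ∈ range T, ∑ τ ∈ range t, s τ * a (t - τ) := sum_le_sum fun t _ => hpointwise t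
    _ ≤ (∑ τ ∈ range T, s τ) * ∑ t ∈ range T, a t := sum_range_sum_range_mul_sub_le hs ha T
    _ ≤ C_s * ∑ t ∈ range T, a t :=
        mul_le_mul_of_nonneg_right (hC T le_rfl) (sum_nonneg fun t _ => ha t)
end
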